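/- arXiv:1501.07460 — 2 statements merged into one kernel-verified Lean document; each statement's English description precedes it below -/
import Mathlib

section
/- Let G be a connected multigraph and define m(G) as the maximum number of pairwise disjoint pairs of adjacent edges whose removal leaves G connected. Then m(G) = 0 if and only if no two distinct cycles of G share a vertex. -/
/-- Two edges of a multigraph (given by its endpoint map `ends`) form a pair of
adjacent edges: they are distinct and share an endpoint. -/
def AdjPair {V E : Type} (ends : E → Sym2 V) (e f : E) : Prop :=
  e ≠ f ∧ ∃ x, x ∈ ends e ∧ x ∈ ends f

/-- Reachability between vertices using only edges in `S`. -/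
def reachOn {V E : Type} (ends : E → Sym2 V) (S : Set E) (a b : V) : Prop :=
  Relation.ReflTransGen (fun x y => ∃ e ∈ S, ends e = s(x, y)) a b

/-- The spanning subgraph with edge set `S` is connected (all vertices mutually reachable). -/
def ConnOn {V E : Type} (ends : E → Sym2 V) (S : Set E) : Prop :=
  ∀ a b : V, reachOn ends S a b

/-- The edges of `S` remaining after deleting all edges occurring in the pair set `P`. -/
def PairsRemoved {E : Type} (S : Set E) (P : Finset (E × E)) : Set E :=
  {x ∈ S | ∀ p ∈ P, x ≠ p.1 ∧ x ≠ p.2}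

/-- `P` is a set of pairwise disjoint pairs of adjacent edges of the (spanning) subgraph
with edge set `S` whose removal leaves a connected spanning subgraph. -/
def ValidOn {V E : Type} (ends : E → Sym2 V) (S : Set E) (P : Finset (E × E)) : Prop :=
  (∀ p ∈ P, p.1 ∈ S ∧ p.2 ∈ S ∧ AdjPair ends p.1 p.2) ∧
  (∀ p ∈ P, ∀ q ∈ P, p ≠ q → p.1 ≠ q.1 ∧ p.1 ≠ q.2 ∧ p.2 ≠ q.1 ∧ p.2 ≠ q.2) ∧
  ConnOn ends (PairsRemoved S P)

/-- `m` of the subgraph with edge set `S`: the maximum number of pairwise disjoint pairs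
of adjacent edges whose removal leaves a connected spanning subgraph. -/
noncomputable def maxPairsOn {V E : Type} (ends : E → Sym2 V) (S : Set E) : ℕ :=
  sSup {k | ∃ P : Finset (E × E), ValidOn ends S P ∧ P.card = k}

/-- A cycle (closed walk with no repeated vertices or edges; length 1 = loop,
length 2 = pair of parallel edges) using only edges from `S`. -/
structure CycleIn {V E : Type} (ends : E → Sym2 V) (S : Set E) where
  n : ℕ
  npos : 0 < n
  v : ZMod n → V
  e : ZMod n → E
  vinj : Function.Injective v
  einj : Function.Injective e
  mem : ∀ i, e i ∈ S
  incid : ∀ i, ends (e i) = s(v i, v (i + 1))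

/-- The number of connected components of the spanning subgraph with edge set `S`
containing an odd number of edges. -/
noncomputable def oddComp {V E : Type} (ends : E → Sym2 V) (S : Set E) : ℕ :=
  Nat.card {c : Quot (reachOn ends S) //
    Odd (Nat.card {e : E // e ∈ S ∧ ∀ x ∈ ends e, Quot.mk (reachOn ends S) x = c})}

section Aux
variable {V E : Type} {ends : E → Sym2 V}

lemma reachOn_mono {S T : Set E} (h : S ⊆ T) {a b} (hr : reachOn ends S a b) :
    reachOn ends T a b :=
  Relation.ReflTransGen.mono (r := fun x y => ∃ e ∈ S, ends e = s(x, y))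
    (p := fun x y => ∃ e ∈ T, ends e = s(x, y)) (fun x y ⟨g, hg, hh⟩ => ⟨g, h hg, hh⟩) a b hr

lemma reachOn_symm {S : Set E} {a b} (hr : reachOn ends S a b) : reachOn ends S b a :=
  by
  haveI : Std.Symm (fun x y => ∃ e ∈ S, ends e = s(x, y)) :=
    ⟨fun x y ⟨g, hg, hh⟩ => ⟨g, hg, hh.trans Sym2.eq_swap⟩⟩
  exact (Relation.ReflTransGen.symmetric (r := fun x y => ∃ e ∈ S, ends e = s(x, y))).symm _ _ hr

lemma reachOn_trans {S : Set E} {a b c} (h1 : reachOn ends S a b) (h2 : reachOn ends S b c) :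
    reachOn ends S a c := h1.trans h2

/-- patch lemma -/
lemma reach_patch {T S' : Set E}
    (h : ∀ g ∈ T, g ∉ S' → ∀ x y, ends g = s(x, y) → reachOn ends S' x y)
    {a b} (hr : reachOn ends T a b) : reachOn ends S' a b := by
  induction hr with
  | refl => exact Relation.ReflTransGen.refl
  | tail hs hstep ih =>
    obtain ⟨g, hgT, hge⟩ := hstep
    by_cases hg : g ∈ S'
    · exact ih.tail ⟨g, hg, hge⟩
    · exact ih.trans (h g hgT hg _ _ hge)

/-- crossing helper: from one orientation, get both -/
lemma cross_of {S' : Set E} {g : E} {u w : V} (hr : reachOn ends S' u w)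
    (he : ends g = s(u, w)) : ∀ x y, ends g = s(x, y) → reachOn ends S' x y := by
  intro x y hxy
  rw [he] at hxy
  rcases Sym2.eq_iff.mp hxy with ⟨h1, h2⟩ | ⟨h1, h2⟩
  · rw [← h1, ← h2]; exact hr
  · rw [← h1, ← h2]; exact reachOn_symm hr

variable {V E : Type}

def gph (ends : E → Sym2 V) (S' : Set E) : SimpleGraph V where
  Adj x y := x ≠ y ∧ ∃ g ∈ S', ends g = s(x, y)
  symm := ⟨fun x y ⟨h, g, hg, he⟩ => ⟨h.symm, g, hg, he.trans Sym2.eq_swap⟩⟩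
  loopless := ⟨fun x ⟨h, _⟩ => h rfl⟩

variable {ends : E → Sym2 V}

lemma reach_to_gph {S' : Set E} {a b : V} (h : reachOn ends S' a b) :
    (gph ends S').Reachable a b := by
  rw [SimpleGraph.reachable_iff_reflTransGen]
  induction h with
  | refl => exact Relation.ReflTransGen.refl
  | tail hs hstep ih =>
    obtain ⟨g, hg, he⟩ := hstep
    rename_i x y
    by_cases hxy : x = y
    · rwa [← hxy]
    · exact ih.tail ⟨hxy, g, hg, he⟩

lemma path_extract {S' : Set E} (e0 : E) {a b : V} (p : (gph ends S').Walk a b)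
    (hp : p.IsPath) :
    ∃ (k : ℕ) (v : ℕ → V) (ed : ℕ → E),
      (∀ i j, i ≤ k → j ≤ k → v i = v j → i = j) ∧ v 0 = a ∧ v k = b ∧
      (∀ i ≤ k, v i ∈ p.support) ∧
      ∀ i < k, ed i ∈ S' ∧ ends (ed i) = s(v i, v (i + 1)) := by
  induction p with
  | nil =>
    rename_i u
    exact ⟨0, fun _ => u, fun _ => e0, fun i j hi hj _ => by omega, rfl, rfl,
      fun i hi => by simp, fun i hi => by omega⟩
  | cons h q ih =>
    rename_i x y z
    rw [SimpleGraph.Walk.cons_isPath_iff] at hp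
    obtain ⟨k, v, ed, vinj, hv0, hvk, hmem, hed⟩ := ih hp.1
    obtain ⟨hne, g, hg, hge⟩ := id h
    refine ⟨k + 1, fun i => if i = 0 then x else v (i - 1),
      fun i => if i = 0 then g else ed (i - 1), ?_, by simp, ?_, ?_, ?_⟩
    · intro i j hi hj hij
      by_cases hi0 : i = 0 <;> by_cases hj0 : j = 0 <;> simp [hi0, hj0] at hij ⊢
      · exact absurd (hij ▸ hmem (j - 1) (by omega)) hp.2
      · exact absurd (hij ▸ hmem (i - 1) (by omega)) hp.2
      · have := vinj _ _ (by omega : i - 1 ≤ k) (by omega : j - 1 ≤ k) hij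
        omega
    · simpa using hvk
    · intro i hi
      rw [SimpleGraph.Walk.support_cons]
      by_cases hi0 : i = 0
      · simp [hi0]
      · simp only [hi0, if_neg]
        exact List.mem_cons_of_mem _ (hmem (i - 1) (by omega))
    · intro i hi
      by_cases hi0 : i = 0
      · subst hi0
        simpa [hv0] using ⟨hg, hge⟩
      · have h1 : i - 1 < k := by omega
        have := hed (i - 1) h1
        have e1 : i - 1 + 1 = i := by omega
        simp only [hi0, if_neg, Nat.succ_ne_zero]
        rw [e1] at this
        simpa [show i + 1 ≠ 0 by omega, show i + 1 - 1 = i by omega] using this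

lemma cycle_of_reach {S' : Set E} {e : E} {a b : V} (hab : ends e = s(a, b))
    (he : e ∉ S') (hr : reachOn ends S' a b) :
    ∃ c : CycleIn ends Set.univ, e ∈ Set.range c.e ∧
      (∀ g ∈ Set.range c.e, g = e ∨ g ∈ S') ∧ a ∈ Set.range c.v ∧ b ∈ Set.range c.v := by
  classical
  obtain ⟨w⟩ := reach_to_gph hr
  obtain ⟨k, v, ed, vinj, hv0, hvk, hmem, hed⟩ := path_extract e w.toPath.1 w.toPath.2
  haveI : NeZero (k + 1) := ⟨Nat.succ_ne_zero k⟩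
  have valle : ∀ z : ZMod (k + 1), z.val ≤ k := fun z => Nat.lt_succ_iff.mp (ZMod.val_lt z)
  -- key: value of z+1
  have hsucc : ∀ z : ZMod (k + 1), z.val < k → (z + 1).val = z.val + 1 := by
    intro z hz
    haveI : Fact (1 < k + 1) := ⟨by omega⟩
    rw [ZMod.val_add_of_lt (by rw [ZMod.val_one]; omega), ZMod.val_one]
  have hlast : ∀ z : ZMod (k + 1), z.val = k → z + 1 = 0 := by
    intro z hz
    have : z = ((z.val : ℕ) : ZMod (k + 1)) := by rw [ZMod.natCast_val, ZMod.cast_id]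
    rw [this, hz]
    have : ((k : ℕ) : ZMod (k + 1)) + 1 = ((k + 1 : ℕ) : ZMod (k + 1)) := by push_cast; ring
    rw [this, ZMod.natCast_self]
  -- edge injectivity on the path
  have edinj : ∀ i j, i < k → j < k → ed i = ed j → i = j := by
    intro i j hi hj hij
    have h1 := (hed i hi).2
    have h2 := (hed j hj).2
    rw [hij, h2] at h1
    rcases Sym2.eq_iff.mp h1.symm with ⟨ha, hb⟩ | ⟨ha, hb⟩
    · exact vinj _ _ (by omega) (by omega) ha
    · have := vinj _ _ (by omega) (by omega) ha
      have := vinj _ _ (by omega) (by omega) hb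
      omega
  refine ⟨⟨k + 1, Nat.succ_pos k, fun z => v z.val,
    fun z => if z.val = k then e else ed z.val, ?_, ?_, fun _ => trivial, ?_⟩, ?_, ?_, ?_, ?_⟩
  · intro z w hzw
    exact ZMod.val_injective _ (vinj _ _ (valle z) (valle w) hzw)
  · intro z w hzw
    simp only at hzw
    by_cases h1 : z.val = k <;> by_cases h2 : w.val = k
    · exact ZMod.val_injective _ (h1.trans h2.symm)
    · rw [if_pos h1, if_neg h2] at hzw
      exact absurd ((hed w.val (by have := valle w; omega)).1) (hzw ▸ he)
    · rw [if_neg h1, if_pos h2] at hzw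
      exact absurd ((hed z.val (by have := valle z; omega)).1) (hzw.symm ▸ he)
    · rw [if_neg h1, if_neg h2] at hzw
      have := edinj _ _ (by have := valle z; omega) (by have := valle w; omega) hzw
      exact ZMod.val_injective _ this
  · intro z
    by_cases h1 : z.val = k
    · rw [if_pos h1, hlast z h1, h1, hab, hvk, ZMod.val_zero, hv0]
      exact Sym2.eq_swap
    · rw [if_neg h1, hsucc z (by have := valle z; omega)]
      exact (hed z.val (by have := valle z; omega)).2
  · refine ⟨(k : ZMod (k + 1)), ?_⟩
    simp [ZMod.val_cast_of_lt (Nat.lt_succ_self k)]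
  · rintro g ⟨z, rfl⟩
    simp only
    by_cases h1 : z.val = k
    · rw [if_pos h1]; exact Or.inl rfl
    · rw [if_neg h1]; exact Or.inr (hed z.val (by have := valle z; omega)).1
  · exact ⟨0, by show v (ZMod.val (0 : ZMod (k + 1))) = a; rw [ZMod.val_zero, hv0]⟩
  · exact ⟨(k : ZMod (k + 1)), by
      show v ((k : ZMod (k + 1)).val) = b
      rw [ZMod.val_cast_of_lt (Nat.lt_succ_self k), hvk]⟩


lemma cycle_detour {S : Set E} (c : CycleIn ends S) (i : ZMod c.n) :
    reachOn ends {x | ∃ j, j ≠ i ∧ x = c.e j} (c.v (i + 1)) (c.v i) := by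
  haveI : NeZero c.n := ⟨c.npos.ne'⟩
  have claim : ∀ k : ℕ, k < c.n →
      reachOn ends {x | ∃ j, j ≠ i ∧ x = c.e j} (c.v (i + 1)) (c.v (i + 1 + (k : ZMod c.n))) := by
    intro k
    induction k with
    | zero => intro _; rw [Nat.cast_zero, add_zero]; exact Relation.ReflTransGen.refl
    | succ k ih =>
      intro hk
      have h1 := ih (Nat.lt_of_succ_lt hk)
      refine h1.tail ⟨c.e (i + 1 + (k : ZMod c.n)), ⟨i + 1 + (k : ZMod c.n), ?_, rfl⟩, ?_⟩
      · intro h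
        have : ((1 + k : ℕ) : ZMod c.n) = 0 := by
          have := sub_eq_zero.mpr h
          push_cast
          linear_combination this
        rw [ZMod.natCast_eq_zero_iff] at this
        have := Nat.le_of_dvd (by omega) this
        omega
      · rw [c.incid]
        congr 1
        push_cast
        ring
  have h := claim (c.n - 1) (by have := c.npos; omega)
  have hc : (i + 1 + ((c.n - 1 : ℕ) : ZMod c.n)) = i := by
    have : ((c.n - 1 : ℕ) : ZMod c.n) + 1 = 0 := by
      have : ((c.n - 1 : ℕ) : ZMod c.n) + 1 = ((c.n - 1 + 1 : ℕ) : ZMod c.n) := by push_cast; ring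
      rw [this]
      have : c.n - 1 + 1 = c.n := by have := c.npos; omega
      rw [this, ZMod.natCast_self]
    linear_combination this
  rwa [hc] at h

lemma pair_exists {S : Set E} (c c' : CycleIn ends S) {i0 : ZMod c.n} {j0 : ZMod c'.n}
    (hv : c.v i0 = c'.v j0) (hg : ∃ j, c'.e j ∉ Set.range c.e) :
    ∃ (i : ZMod c.n) (j : ZMod c'.n), c'.e j ∉ Set.range c.e ∧ c.v i ∈ ends (c'.e j) := by
  classical
  haveI : NeZero c'.n := ⟨c'.npos.ne'⟩
  have hP : ∃ k : ℕ, c'.e (j0 + (k : ZMod c'.n)) ∉ Set.range c.e := by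
    obtain ⟨j, hj⟩ := hg
    refine ⟨(j - j0).val, ?_⟩
    rwa [ZMod.natCast_val, ZMod.cast_id, add_sub_cancel]
  set k0 := Nat.find hP with hk0
  have hfind := Nat.find_spec hP
  cases hk : k0 with
  | zero =>
    rw [hk0] at hk
    rw [hk] at hfind
    refine ⟨i0, j0, by simpa using hfind, ?_⟩
    rw [c'.incid, hv]
    simp
  | succ m =>
    have hm : c'.e (j0 + (m : ZMod c'.n)) ∈ Set.range c.e := by
      have := Nat.find_min hP (by omega : m < Nat.find hP)
      simpa using not_not.mp this
    obtain ⟨i1, hi1⟩ := hm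
    have hends : s(c.v i1, c.v (i1 + 1)) = s(c'.v (j0 + (m : ZMod c'.n)), c'.v (j0 + (m : ZMod c'.n) + 1)) := by
      rw [← c.incid, ← c'.incid, hi1]
    have hcast : j0 + ((m + 1 : ℕ) : ZMod c'.n) = j0 + (m : ZMod c'.n) + 1 := by
      push_cast; ring
    rw [hk0] at hk
    rw [hk] at hfind
    have hw : c'.v (j0 + (m : ZMod c'.n) + 1) ∈ Set.range c.v := by
      rcases Sym2.eq_iff.mp hends with ⟨h1, h2⟩ | ⟨h1, h2⟩
      · exact ⟨i1 + 1, h2.symm ▸ rfl⟩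
      · exact ⟨i1, h1 ▸ rfl⟩
    obtain ⟨i, hi⟩ := hw
    refine ⟨i, j0 + ((m + 1 : ℕ) : ZMod c'.n), hfind, ?_⟩
    rw [c'.incid, hcast, hi]
    simp

lemma conn_pair (hG : ConnOn ends Set.univ) (c c' : CycleIn ends Set.univ)
    {i0 : ZMod c.n} {j0 : ZMod c'.n} (hv : c.v i0 = c'.v j0)
    (hg : ∃ j, c'.e j ∉ Set.range c.e) :
    ∃ e f : E, e ≠ f ∧ (∃ x, x ∈ ends e ∧ x ∈ ends f) ∧
      ConnOn ends {x | x ≠ e ∧ x ≠ f} := by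
  obtain ⟨i, j, hf, hx⟩ := pair_exists c c' hv hg
  set e := c.e i with he
  set f := c'.e j with hfe
  have hef : e ≠ f := fun h => hf ⟨i, by rw [← he]; exact h⟩
  have hxe : c.v i ∈ ends e := by rw [he, c.incid]; simp
  have reach_e : reachOn ends {x | x ≠ e ∧ x ≠ f} (c.v (i + 1)) (c.v i) := by
    refine reachOn_mono ?_ (cycle_detour c i)
    rintro g ⟨j', hj', rfl⟩
    exact ⟨fun h => hj' (c.einj h), fun h => hf ⟨j', h⟩⟩
  have cross_e : ∀ x y, ends e = s(x, y) →
      reachOn ends {x | x ≠ e ∧ x ≠ f} x y :=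
    cross_of reach_e (by rw [he, c.incid]; exact Sym2.eq_swap)
  have reach_f' : reachOn ends {x | x ≠ f} (c'.v (j + 1)) (c'.v j) := by
    refine reachOn_mono ?_ (cycle_detour c' j)
    rintro g ⟨k, hk, rfl⟩
    exact fun h => hk (c'.einj h)
  have reach_f : reachOn ends {x | x ≠ e ∧ x ≠ f} (c'.v (j + 1)) (c'.v j) := by
    refine reach_patch ?_ reach_f'
    intro g hgT hgS x y hxy
    have hge : g = e := by
      by_contra hne
      exact hgS ⟨hne, hgT⟩
    subst hge
    exact cross_e x y hxy
  have cross_f : ∀ x y, ends f = s(x, y) →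
      reachOn ends {x | x ≠ e ∧ x ≠ f} x y :=
    cross_of reach_f (by rw [hfe, c'.incid]; exact Sym2.eq_swap)
  refine ⟨e, f, hef, ⟨c.v i, hxe, hx⟩, ?_⟩
  intro a b
  refine reach_patch ?_ (hG a b)
  intro g _ hgS x y hxy
  by_cases hge : g = e
  · exact cross_e x y (hge ▸ hxy)
  · have hgf : g = f := by
      by_contra hgf
      exact hgS ⟨hge, hgf⟩
    exact cross_f x y (hgf ▸ hxy)

end Aux
/-- `m(G) = 0` iff no two distinct cycles of `G` share a vertex. -/

theorem maxPairs_eq_zero_iff {V E : Type} [Fintype V] [Fintype E]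
    (ends : E → Sym2 V) (hG : ConnOn ends Set.univ) :
    maxPairsOn ends Set.univ = 0 ↔
      ∀ c c' : CycleIn ends Set.univ,
        Set.range c.e ≠ Set.range c'.e → ∀ i j, c.v i ≠ c'.v j := by
  classical
  have hbdd : BddAbove {k | ∃ P : Finset (E × E), ValidOn ends Set.univ P ∧ P.card = k} := by
    refine ⟨Fintype.card (E × E), ?_⟩
    rintro k ⟨P, _, rfl⟩
    simpa using Finset.card_le_univ P
  have hne0 : (0 : ℕ) ∈ {k | ∃ P : Finset (E × E), ValidOn ends Set.univ P ∧ P.card = k} := by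
    refine ⟨∅, ⟨by simp, by simp, ?_⟩, by simp⟩
    have : PairsRemoved (Set.univ : Set E) ∅ = Set.univ := by
      ext x; simp [PairsRemoved]
    rw [this]; exact hG
  constructor
  · intro h0 c c' hne i j
    intro heq
    -- produce a pair of adjacent edges whose removal keeps connectivity
    have hpair : ∃ e f : E, e ≠ f ∧ (∃ x, x ∈ ends e ∧ x ∈ ends f) ∧
        ConnOn ends {x | x ≠ e ∧ x ≠ f} := by
      by_cases hsub : ∃ jj, c'.e jj ∉ Set.range c.e
      · exact conn_pair hG c c' heq hsub
      · push_neg at hsub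
        have hsub2 : ∃ ii, c.e ii ∉ Set.range c'.e := by
          by_contra hsub2
          push_neg at hsub2
          apply hne
          apply Set.Subset.antisymm
          · rintro g ⟨ii, rfl⟩; exact hsub2 ii
          · rintro g ⟨jj, rfl⟩; exact hsub jj
        exact conn_pair hG c' c heq.symm hsub2
    obtain ⟨e, f, hef, ⟨x, hx1, hx2⟩, hconn⟩ := hpair
    have hval : ValidOn ends Set.univ {(e, f)} := by
      refine ⟨?_, ?_, ?_⟩
      · intro p hp
        rw [Finset.mem_singleton] at hp
        subst hp
        exact ⟨Set.mem_univ _, Set.mem_univ _, hef, x, hx1, hx2⟩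
      · intro p hp q hq hpq
        rw [Finset.mem_singleton] at hp hq
        exact absurd (hp.trans hq.symm) hpq
      · have : PairsRemoved (Set.univ : Set E) {(e, f)} = {x | x ≠ e ∧ x ≠ f} := by
          ext g; simp [PairsRemoved]
        rw [this]; exact hconn
    have h1 : (1 : ℕ) ∈ {k | ∃ P : Finset (E × E), ValidOn ends Set.univ P ∧ P.card = k} :=
      ⟨{(e, f)}, hval, Finset.card_singleton _⟩
    have := le_csSup hbdd h1
    rw [maxPairsOn] at h0
    omega
  · intro hcyc
    by_contra h0
    have hmem := Nat.sSup_mem ⟨0, hne0⟩ hbdd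
    rw [maxPairsOn] at h0
    obtain ⟨P, hval, hcard⟩ := hmem
    have hPne : P.Nonempty := Finset.card_pos.mp (by omega)
    obtain ⟨p, hp⟩ := hPne
    obtain ⟨-, -, hef, x, hx1, hx2⟩ := hval.1 p hp
    have hconn' := hval.2.2
    have hsub : PairsRemoved (Set.univ : Set E) P ⊆ {g | g ≠ p.1 ∧ g ≠ p.2} := by
      intro g hg
      exact hg.2 p hp
    have hconn : ConnOn ends {g | g ≠ p.1 ∧ g ≠ p.2} :=
      fun a b => reachOn_mono hsub (hconn' a b)
    obtain ⟨⟨a, b⟩, hab⟩ := Quot.exists_rep (ends p.1)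
    obtain ⟨⟨a', b'⟩, hab'⟩ := Quot.exists_rep (ends p.2)
    have hab : ends p.1 = s(a, b) := hab.symm
    have hab' : ends p.2 = s(a', b') := hab'.symm
    obtain ⟨c1, hc1e, hc1r, hc1a, hc1b⟩ :=
      cycle_of_reach hab (by simp : p.1 ∉ {g | g ≠ p.1 ∧ g ≠ p.2}) (hconn a b)
    obtain ⟨c2, hc2e, hc2r, hc2a, hc2b⟩ :=
      cycle_of_reach hab' (by simp : p.2 ∉ {g | g ≠ p.1 ∧ g ≠ p.2}) (hconn a' b')
    have hrange : Set.range c1.e ≠ Set.range c2.e := by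
      intro hEq
      rcases hc2r p.1 (hEq ▸ hc1e) with h | h
      · exact hef h
      · exact h.1 rfl
    -- x is a vertex of both cycles
    have hxc1 : x ∈ Set.range c1.v := by
      rw [hab] at hx1
      rcases Sym2.mem_iff.mp hx1 with h | h
      · exact h ▸ hc1a
      · exact h ▸ hc1b
    have hxc2 : x ∈ Set.range c2.v := by
      rw [hab'] at hx2
      rcases Sym2.mem_iff.mp hx2 with h | h
      · exact h ▸ hc2a
      · exact h ▸ hc2b
    obtain ⟨i, hi⟩ := hxc1
    obtain ⟨jj, hjj⟩ := hxc2
    exact hcyc c1 c2 hrange i jj (hi.trans hjj.symm)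
end

section
/- Every finite connected multigraph with an even number of edges in which every vertex is incident with at least one edge admits a partition of its edge set into pairs of adjacent edges. -/
section Aux

variable {V E : Type} {ends : E → Sym2 V}

lemma reach_mono {S T : Set E} (hST : S ⊆ T) {x y : V} (h : reachOn ends S x y) :
    reachOn ends T x y :=
  Relation.ReflTransGen.mono (r := fun x y => ∃ e ∈ S, ends e = s(x, y))
    (p := fun x y => ∃ e ∈ T, ends e = s(x, y)) (fun a b ⟨e, he, hab⟩ => ⟨e, hST he, hab⟩) x y h

lemma reach_symm {S : Set E} {x y : V} (h : reachOn ends S x y) : reachOn ends S y x := by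
  induction h with
  | refl => exact .refl
  | tail _ hbc ih =>
    obtain ⟨e, he, hee⟩ := hbc
    exact Relation.ReflTransGen.trans
      (Relation.ReflTransGen.single ⟨e, he, hee.trans Sym2.eq_swap⟩) ih

lemma reach_of_mem {S : Set E} {m : E} (hm : m ∈ S) {x y : V}
    (hx : x ∈ ends m) (hy : y ∈ ends m) : reachOn ends S x y := by
  obtain ⟨b, hb⟩ := Sym2.mem_iff_exists.mp hx
  rw [hb, Sym2.mem_iff] at hy
  rcases hy with rfl | rfl
  · exact .refl
  · exact Relation.ReflTransGen.single ⟨m, hm, hb⟩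

lemma reach_split {S : Set E} {e0 : E} {x y : V} (h : reachOn ends S x y) :
    reachOn ends (S \ {e0}) x y ∨ ∃ p ∈ ends e0, reachOn ends (S \ {e0}) x p := by
  induction h with
  | refl => exact Or.inl .refl
  | tail _ hbc ih =>
    obtain ⟨e, heS, hee⟩ := hbc
    rcases ih with ih | ih
    · by_cases he0 : e = e0
      · subst he0
        exact Or.inr ⟨_, by rw [hee]; exact Sym2.mem_mk_left _ _, ih⟩
      · exact Or.inl (ih.tail ⟨e, ⟨heS, he0⟩, hee⟩)
    · exact Or.inr ih

lemma reach_comp {S : Set E} {x y : V} (h : reachOn ends S x y) :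
    reachOn ends {g | g ∈ S ∧ ∃ z ∈ ends g, reachOn ends S z x} x y := by
  induction h with
  | refl => exact .refl
  | tail hab hbc ih =>
    obtain ⟨e, heS, hee⟩ := hbc
    refine ih.tail ⟨e, ⟨heS, _, by rw [hee]; exact Sym2.mem_mk_left _ _, reach_symm hab⟩, hee⟩

lemma reach_last {S : Set E} {x p : V} (h : reachOn ends S x p) :
    p = x ∨ ∃ g ∈ S, p ∈ ends g := by
  induction h with
  | refl => exact Or.inl rfl
  | tail _ hbc _ =>
    obtain ⟨e, heS, hee⟩ := hbc
    exact Or.inr ⟨e, heS, by rw [hee]; exact Sym2.mem_mk_right _ _⟩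

def EConn (ends : E → Sym2 V) (S : Set E) : Prop :=
  ∀ m1 ∈ S, ∀ m2 ∈ S, ∀ x ∈ ends m1, ∀ y ∈ ends m2, reachOn ends S x y

lemma step_lemma [DecidableEq E] (ends : E → Sym2 V) :
    ∀ n (S : Finset E), S.card ≤ n → EConn ends ↑S → 2 ≤ S.card →
    ∀ r : V, (∃ m ∈ S, r ∈ ends m) →
    ∃ f ∈ S, ∃ g ∈ S, f ≠ g ∧ (∃ x, x ∈ ends f ∧ x ∈ ends g) ∧
      EConn ends ↑((S.erase f).erase g) ∧
      ((S.erase f).erase g = ∅ ∨ ∃ m ∈ (S.erase f).erase g, r ∈ ends m) := by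
  intro n
  induction n with
  | zero => intro S hn _ h2 _ _; omega
  | succ n IH =>
  intro S hn hconn hcard r hr
  classical
  obtain ⟨e0, he0S, hre0⟩ := hr
  obtain ⟨v0, hv0⟩ : ∃ v0, ends e0 = s(r, v0) := Sym2.mem_iff_exists.mp hre0
  set S' := S.erase e0 with hS'def
  have hS'sub : S' ⊆ S := Finset.erase_subset _ _
  have hS'coe : (↑S' : Set E) = ↑S \ {e0} := Finset.coe_erase _ _
  have hsplit : ∀ x : V, (∃ m ∈ S, x ∈ ends m) →
      ∃ p, p ∈ ends e0 ∧ reachOn ends ↑S' x p := by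
    rintro x ⟨m, hmS, hxm⟩
    have hxr : reachOn ends ↑S x r := hconn m hmS e0 he0S x hxm r hre0
    rcases reach_split (e0 := e0) hxr with h | ⟨p, hp, hre⟩
    · exact ⟨r, hre0, by rwa [hS'coe]⟩
    · exact ⟨p, hp, by rwa [hS'coe]⟩
  by_cases hA : ∃ h1 ∈ S', ∃ h2 ∈ S', h1 ≠ h2 ∧
      ∃ z1 ∈ ends h1, ∃ z2 ∈ ends h2, reachOn ends ↑S' z1 z2
  · -- Case A : some component of S' has ≥ 2 edges
    obtain ⟨h1, hh1, h2, hh2, hne, z1, hz1, z2, hz2, hzr⟩ := hA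
    set C := S'.filter (fun g => ∃ z ∈ ends g, reachOn ends ↑S' z z1) with hCdef
    have hh1C : h1 ∈ C := Finset.mem_filter.mpr ⟨hh1, z1, hz1, .refl⟩
    have hh2C : h2 ∈ C := Finset.mem_filter.mpr ⟨hh2, z2, hz2, reach_symm hzr⟩
    have hCsub : C ⊆ S' := Finset.filter_subset _ _
    have hreachC : ∀ m ∈ C, ∀ x ∈ ends m, reachOn ends ↑S' x z1 := by
      intro m hm x hx
      obtain ⟨hmS', z, hz, hzreach⟩ := Finset.mem_filter.mp hm
      exact (reach_of_mem (Finset.mem_coe.mpr hmS') hx hz).trans hzreach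
    have hconnC : EConn ends ↑C := by
      intro m1 hm1 m2 hm2 x hx y hy
      have hx1 := hreachC m1 (Finset.mem_coe.mp hm1) x hx
      have hy1 := hreachC m2 (Finset.mem_coe.mp hm2) y hy
      have hxy : reachOn ends ↑S' x y := hx1.trans (reach_symm hy1)
      refine reach_mono ?_ (reach_comp hxy)
      rintro g ⟨hgS', z, hz, hzx⟩
      exact Finset.mem_coe.mpr (Finset.mem_filter.mpr
        ⟨Finset.mem_coe.mp hgS', z, hz, hzx.trans hx1⟩)
    obtain ⟨p, hpe0, hpz⟩ := hsplit z1 ⟨h1, hS'sub hh1, hz1⟩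
    have hpC : ∃ m ∈ C, p ∈ ends m := by
      rcases reach_last (reach_comp hpz) with rfl | ⟨g, hg, hpg⟩
      · exact ⟨h1, hh1C, hz1⟩
      · obtain ⟨hgS', z, hz, hzx⟩ := hg
        exact ⟨g, Finset.mem_filter.mpr ⟨Finset.mem_coe.mp hgS', z, hz, hzx⟩, hpg⟩
    have hCcard : 2 ≤ C.card := Finset.one_lt_card.mpr ⟨h1, hh1C, h2, hh2C, hne⟩
    have hClt : C.card < S.card :=
      lt_of_le_of_lt (Finset.card_le_card hCsub) (Finset.card_erase_lt_of_mem he0S)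
    obtain ⟨f, hfC, g, hgC, hfg, hadj, hconnRC, hspanRC⟩ :=
      IH C (by omega) hconnC hCcard p hpC
    have hfS' : f ∈ S' := hCsub hfC
    have hgS' : g ∈ S' := hCsub hgC
    have hfne0 : f ≠ e0 := (Finset.mem_erase.mp hfS').1
    have hgne0 : g ≠ e0 := (Finset.mem_erase.mp hgS').1
    have he0R : e0 ∈ (S.erase f).erase g :=
      Finset.mem_erase.mpr ⟨Ne.symm hgne0, Finset.mem_erase.mpr ⟨Ne.symm hfne0, he0S⟩⟩
    have hkey : ∀ m ∈ (S.erase f).erase g, ∀ x ∈ ends m,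
        reachOn ends ↑((S.erase f).erase g) x r := by
      intro m hmR x hx
      obtain ⟨hmg, hmf, hmS⟩ : m ≠ g ∧ m ≠ f ∧ m ∈ S := by
        obtain ⟨h1', h2'⟩ := Finset.mem_erase.mp hmR
        exact ⟨h1', (Finset.mem_erase.mp h2').1, (Finset.mem_erase.mp h2').2⟩
      by_cases hme0 : m = e0
      · subst hme0
        exact reach_of_mem (Finset.mem_coe.mpr hmR) hx hre0
      have hmS' : m ∈ S' := Finset.mem_erase.mpr ⟨hme0, hmS⟩
      have hpr : reachOn ends ↑((S.erase f).erase g) p r :=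
        reach_of_mem (Finset.mem_coe.mpr he0R) hpe0 hre0
      by_cases hmC : m ∈ C
      · have hmRC : m ∈ (C.erase f).erase g :=
          Finset.mem_erase.mpr ⟨hmg, Finset.mem_erase.mpr ⟨hmf, hmC⟩⟩
        rcases hspanRC with hempty | ⟨h', hh', hph'⟩
        · rw [hempty] at hmRC; simp at hmRC
        · have hxp : reachOn ends ↑((C.erase f).erase g) x p :=
            hconnRC m hmRC h' hh' x hx p hph'
          have hsub : (↑((C.erase f).erase g) : Set E) ⊆ ↑((S.erase f).erase g) := by
            intro m' hm'
            obtain ⟨h1', h2'⟩ := Finset.mem_erase.mp (Finset.mem_coe.mp hm')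
            obtain ⟨h3', h4'⟩ := Finset.mem_erase.mp h2'
            exact Finset.mem_coe.mpr (Finset.mem_erase.mpr
              ⟨h1', Finset.mem_erase.mpr ⟨h3', hS'sub (hCsub h4')⟩⟩)
          exact (reach_mono hsub hxp).trans hpr
      · obtain ⟨p', hp'e0, hp'r⟩ := hsplit x ⟨m, hmS, hx⟩
        have hnotC : ∀ w ∈ C, (∃ z ∈ ends w, reachOn ends ↑S' z x) → False := by
          rintro w hwC ⟨z', hz', hz'x⟩
          obtain ⟨hwS', zc, hzc, hzcz1⟩ := Finset.mem_filter.mp hwC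
          have : reachOn ends ↑S' x z1 :=
            ((reach_symm hz'x).trans (reach_of_mem (Finset.mem_coe.mpr hwS') hz' hzc)).trans hzcz1
          exact hmC (Finset.mem_filter.mpr ⟨hmS', x, hx, this⟩)
        have hsub : {g' | g' ∈ (↑S' : Set E) ∧ ∃ z ∈ ends g', reachOn ends ↑S' z x} ⊆
            ↑((S.erase f).erase g) := by
          rintro g' ⟨hg'S', hrel⟩
          have hg'S'' : g' ∈ S' := Finset.mem_coe.mp hg'S'
          refine Finset.mem_coe.mpr (Finset.mem_erase.mpr ⟨?_, Finset.mem_erase.mpr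
            ⟨?_, hS'sub hg'S''⟩⟩)
          · rintro rfl; exact hnotC g' hgC hrel
          · rintro rfl; exact hnotC g' hfC hrel
        have := reach_mono hsub (reach_comp hp'r)
        exact this.trans (reach_of_mem (Finset.mem_coe.mpr he0R) hp'e0 hre0)
    refine ⟨f, hS'sub hfS', g, hS'sub hgS', hfg, hadj, ?_, Or.inr ⟨e0, he0R, hre0⟩⟩
    intro m1 hm1 m2 hm2 x hx y hy
    exact (hkey m1 (Finset.mem_coe.mp hm1) x hx).trans
      (reach_symm (hkey m2 (Finset.mem_coe.mp hm2) y hy))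
  · -- Case B : all components of S' are singletons
    push_neg at hA
    have hend : ∀ h ∈ S', ∃ p, p ∈ ends h ∧ p ∈ ends e0 := by
      intro h hh
      obtain ⟨a, ha⟩ : ∃ a, a ∈ ends h := ⟨(Quot.out (ends h)).1, Sym2.out_fst_mem _⟩
      obtain ⟨p, hpe0, hpr⟩ := hsplit a ⟨h, hS'sub hh, ha⟩
      have hsub : {g | g ∈ (↑S' : Set E) ∧ ∃ z ∈ ends g, reachOn ends ↑S' z a} ⊆
          ({h} : Set E) := by
        rintro g ⟨hgS', z, hz, hza⟩
        by_contra hgh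
        have hgh' : g ≠ h := fun he => hgh (by simp [he])
        exact hA g (Finset.mem_coe.mp hgS') h hh hgh' z hz a ha hza
      rcases reach_last (reach_mono hsub (reach_comp hpr)) with heq | ⟨g, hg, hpg⟩
      · exact ⟨p, by rw [heq]; exact ha, hpe0⟩
      · have hgh2 : g = h := hg
        exact ⟨p, hgh2 ▸ hpg, hpe0⟩
    set X := S'.filter (fun h => r ∈ ends h) with hXdef
    set Y := S'.filter (fun h => r ∉ ends h) with hYdef
    have hv0Y : ∀ h ∈ Y, v0 ∈ ends h := by
      intro h hh
      obtain ⟨hhS', hrh⟩ := Finset.mem_filter.mp hh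
      obtain ⟨p, hph, hpe0⟩ := hend h hhS'
      rw [hv0, Sym2.mem_iff] at hpe0
      rcases hpe0 with rfl | rfl
      · exact absurd hph hrh
      · exact hph
    -- helper: build conclusion when the pair is two edges of S' both containing a common
    -- vertex of ends e0
    have hbuild : ∀ h1 ∈ S', ∀ h2 ∈ S', h1 ≠ h2 → (∃ x, x ∈ ends h1 ∧ x ∈ ends h2) →
        ∃ f ∈ S, ∃ g ∈ S, f ≠ g ∧ (∃ x, x ∈ ends f ∧ x ∈ ends g) ∧
        EConn ends ↑((S.erase f).erase g) ∧
        ((S.erase f).erase g = ∅ ∨ ∃ m ∈ (S.erase f).erase g, r ∈ ends m) := by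
      intro h1 hh1 h2 hh2 hne hadj
      have he0R : e0 ∈ (S.erase h1).erase h2 :=
        Finset.mem_erase.mpr ⟨Ne.symm (Finset.mem_erase.mp hh2).1,
          Finset.mem_erase.mpr ⟨Ne.symm (Finset.mem_erase.mp hh1).1, he0S⟩⟩
      have hkey : ∀ m ∈ (S.erase h1).erase h2, ∀ x ∈ ends m,
          reachOn ends ↑((S.erase h1).erase h2) x r := by
        intro m hmR x hx
        have hmS : m ∈ S := Finset.mem_of_mem_erase (Finset.mem_of_mem_erase hmR)
        by_cases hme0 : m = e0
        · subst hme0; exact reach_of_mem (Finset.mem_coe.mpr hmR) hx hre0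
        · obtain ⟨p, hpm, hpe0⟩ := hend m (Finset.mem_erase.mpr ⟨hme0, hmS⟩)
          exact (reach_of_mem (Finset.mem_coe.mpr hmR) hx hpm).trans
            (reach_of_mem (Finset.mem_coe.mpr he0R) hpe0 hre0)
      refine ⟨h1, hS'sub hh1, h2, hS'sub hh2, hne, hadj, ?_, Or.inr ⟨e0, he0R, hre0⟩⟩
      intro m1 hm1 m2 hm2 x hx y hy
      exact (hkey m1 (Finset.mem_coe.mp hm1) x hx).trans
        (reach_symm (hkey m2 (Finset.mem_coe.mp hm2) y hy))
    by_cases hX : 2 ≤ X.card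
    · obtain ⟨h1, hh1, h2, hh2, hne⟩ := Finset.one_lt_card.mp hX
      exact hbuild h1 (Finset.mem_of_mem_filter _ hh1) h2 (Finset.mem_of_mem_filter _ hh2) hne
        ⟨r, (Finset.mem_filter.mp hh1).2, (Finset.mem_filter.mp hh2).2⟩
    by_cases hY : 2 ≤ Y.card
    · obtain ⟨h1, hh1, h2, hh2, hne⟩ := Finset.one_lt_card.mp hY
      exact hbuild h1 (Finset.mem_of_mem_filter _ hh1) h2 (Finset.mem_of_mem_filter _ hh2) hne
        ⟨v0, hv0Y h1 hh1, hv0Y h2 hh2⟩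
    -- small cases
    have hXY : X.card + Y.card = S'.card :=
      Finset.card_filter_add_card_filter_not _
    have hS'card : S'.card = S.card - 1 := Finset.card_erase_of_mem he0S
    have hS'small : S'.card = 1 ∨ S'.card = 2 := by omega
    rcases hS'small with hc1 | hc2
    · -- S = {e0, h} : pair them
      obtain ⟨h, hhset⟩ := Finset.card_eq_one.mp hc1
      have hhS' : h ∈ S' := by rw [hhset]; exact Finset.mem_singleton_self h
      obtain ⟨p, hph, hpe0⟩ := hend h hhS'
      have hne : e0 ≠ h := fun he => (Finset.mem_erase.mp hhS').1 he.symm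
      refine ⟨e0, he0S, h, hS'sub hhS', hne, ⟨p, hpe0, hph⟩, ?_, Or.inl ?_⟩
      · intro m1 hm1
        exfalso
        have : (S.erase e0).erase h = ∅ := by
          rw [← hS'def, hhset, Finset.erase_singleton]
        rw [this] at hm1
        simp at hm1
      · rw [← hS'def, hhset, Finset.erase_singleton]
    · -- S' = {a1, a2}, a1 ∈ X, a2 ∈ Y : pair (e0, a2), leaving {a1}
      have hX1 : X.card = 1 := by omega
      have hY1 : Y.card = 1 := by omega
      obtain ⟨a1, hXset⟩ := Finset.card_eq_one.mp hX1
      obtain ⟨a2, hYset⟩ := Finset.card_eq_one.mp hY1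
      have hh1X : a1 ∈ X := by rw [hXset]; exact Finset.mem_singleton_self a1
      have hh2Y : a2 ∈ Y := by rw [hYset]; exact Finset.mem_singleton_self a2
      have hh1S' : a1 ∈ S' := Finset.mem_of_mem_filter _ hh1X
      have hh2S' : a2 ∈ S' := Finset.mem_of_mem_filter _ hh2Y
      have hrh1 : r ∈ ends a1 := (Finset.mem_filter.mp hh1X).2
      have hrh2 : r ∉ ends a2 := (Finset.mem_filter.mp hh2Y).2
      have hne : e0 ≠ a2 := fun he => (Finset.mem_erase.mp hh2S').1 he.symm
      have hR : (S.erase e0).erase a2 = {a1} := by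
        ext m
        simp only [Finset.mem_erase, Finset.mem_singleton]
        constructor
        · rintro ⟨hmh2, hme0, hmS⟩
          have hmS'' : m ∈ S' := Finset.mem_erase.mpr ⟨hme0, hmS⟩
          by_cases hrm : r ∈ ends m
          · have hmx : m ∈ X := Finset.mem_filter.mpr ⟨hmS'', hrm⟩
            rwa [hXset, Finset.mem_singleton] at hmx
          · have hmy : m ∈ Y := Finset.mem_filter.mpr ⟨hmS'', hrm⟩
            rw [hYset, Finset.mem_singleton] at hmy
            exact absurd hmy hmh2
        · rintro heq
          have hne12 : a1 ≠ a2 := fun he => hrh2 (he ▸ hrh1)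
          rw [heq]
          exact ⟨hne12, Finset.mem_erase.mp hh1S'⟩
      have hh1R : a1 ∈ ((S.erase e0).erase a2 : Finset E) := by
        rw [hR]; exact Finset.mem_singleton_self _
      refine ⟨e0, he0S, a2, hS'sub hh2S', hne,
        ⟨v0, by rw [hv0]; exact Sym2.mem_mk_right _ _, hv0Y a2 hh2Y⟩, ?_, Or.inr ?_⟩
      · intro m1 hm1 m2 hm2 x hx y hy
        rw [Finset.mem_coe, hR, Finset.mem_singleton] at hm1 hm2
        rw [hm1] at hx
        rw [hm2] at hy
        exact reach_of_mem (Finset.mem_coe.mpr hh1R) hx hy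
      · exact ⟨a1, hh1R, hrh1⟩

lemma main_lemma [DecidableEq E] (ends : E → Sym2 V) :
    ∀ n (S : Finset E), S.card ≤ n → EConn ends ↑S → Even S.card →
    ∃ P : Finset (E × E),
      (∀ p ∈ P, p.1 ∈ S ∧ p.2 ∈ S ∧ AdjPair ends p.1 p.2) ∧
      (∀ p ∈ P, ∀ q ∈ P, p ≠ q → p.1 ≠ q.1 ∧ p.1 ≠ q.2 ∧ p.2 ≠ q.1 ∧ p.2 ≠ q.2) ∧
      (∀ x ∈ S, ∃ p ∈ P, x = p.1 ∨ x = p.2) := by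
  intro n
  induction n with
  | zero =>
    intro S hn _ _
    have hS : S = ∅ := Finset.card_eq_zero.mp (Nat.le_zero.mp hn)
    subst hS
    exact ⟨∅, by simp, by simp, by simp⟩
  | succ n ih =>
    intro S hn hconn heven
    rcases Finset.eq_empty_or_nonempty S with rfl | ⟨e, he⟩
    · exact ⟨∅, by simp, by simp, by simp⟩
    · have h1 : 1 ≤ S.card := Finset.card_pos.mpr ⟨e, he⟩
      have h2 : 2 ≤ S.card := by
        obtain ⟨k, hk⟩ := heven; omega
      obtain ⟨r, hrmem⟩ : ∃ r, r ∈ ends e := ⟨(Quot.out (ends e)).1, Sym2.out_fst_mem _⟩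
      obtain ⟨f, hf, g, hg, hfg, hadj, hconnR, _⟩ :=
        step_lemma ends S.card S le_rfl hconn h2 r ⟨e, he, hrmem⟩
      have hgR : g ∈ S.erase f := Finset.mem_erase.mpr ⟨fun h => hfg h.symm, hg⟩
      have hcardR : ((S.erase f).erase g).card = S.card - 2 := by
        rw [Finset.card_erase_of_mem hgR, Finset.card_erase_of_mem hf]; omega
      have hle : ((S.erase f).erase g).card ≤ n := by omega
      have hevenR : Even ((S.erase f).erase g).card := by
        obtain ⟨k, hk⟩ := heven
        exact ⟨k - 1, by omega⟩
      obtain ⟨P', hP1, hP2, hP3⟩ := ih ((S.erase f).erase g) hle hconnR hevenR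
      have hmemR : ∀ p : E × E, p ∈ P' → (p.1 ≠ f ∧ p.1 ≠ g ∧ p.2 ≠ f ∧ p.2 ≠ g) := by
        intro p hp
        obtain ⟨hp1, hp2, _⟩ := hP1 p hp
        obtain ⟨a1, b1⟩ := Finset.mem_erase.mp hp1
        obtain ⟨a2, b2⟩ := Finset.mem_erase.mp hp2
        exact ⟨(Finset.mem_erase.mp b1).1, a1, (Finset.mem_erase.mp b2).1, a2⟩
      refine ⟨insert (f, g) P', ?_, ?_, ?_⟩
      · intro p hp
        rcases Finset.mem_insert.mp hp with rfl | hp'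
        · exact ⟨hf, hg, hfg, hadj⟩
        · obtain ⟨hp1, hp2, hp3⟩ := hP1 p hp'
          exact ⟨Finset.mem_of_mem_erase (Finset.mem_of_mem_erase hp1),
            Finset.mem_of_mem_erase (Finset.mem_of_mem_erase hp2), hp3⟩
      · intro p hp q hq hpq
        rcases Finset.mem_insert.mp hp with rfl | hp'
        · rcases Finset.mem_insert.mp hq with rfl | hq'
          · exact absurd rfl hpq
          · obtain ⟨a1, a2, a3, a4⟩ := hmemR q hq'
            exact ⟨Ne.symm a1, Ne.symm a3, Ne.symm a2, Ne.symm a4⟩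
        · rcases Finset.mem_insert.mp hq with rfl | hq'
          · obtain ⟨a1, a2, a3, a4⟩ := hmemR p hp'
            exact ⟨a1, a2, a3, a4⟩
          · exact hP2 p hp' q hq' hpq
      · intro x hx
        by_cases hxf : x = f
        · exact ⟨(f, g), Finset.mem_insert_self _ _, Or.inl hxf⟩
        by_cases hxg : x = g
        · exact ⟨(f, g), Finset.mem_insert_self _ _, Or.inr hxg⟩
        · obtain ⟨p, hp, hor⟩ := hP3 x
            (Finset.mem_erase.mpr ⟨hxg, Finset.mem_erase.mpr ⟨hxf, hx⟩⟩)
          exact ⟨p, Finset.mem_insert_of_mem hp, hor⟩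

end Aux

/-- a connected multigraph with an even number of edges and no isolated
vertex has a partition of its edge set into pairs of adjacent edges. -/
theorem even_edge_partition {V E : Type} [Fintype V] [Fintype E]
    (ends : E → Sym2 V) (hG : ConnOn ends Set.univ)
    (heven : Even (Fintype.card E))
    (hcov : ∀ v : V, ∃ e : E, v ∈ ends e) :
    ∃ P : Finset (E × E),
      (∀ p ∈ P, AdjPair ends p.1 p.2) ∧
      (∀ p ∈ P, ∀ q ∈ P, p ≠ q → p.1 ≠ q.1 ∧ p.1 ≠ q.2 ∧ p.2 ≠ q.1 ∧ p.2 ≠ q.2) ∧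
      (∀ x : E, ∃ p ∈ P, x = p.1 ∨ x = p.2) := by
    classical
  have hconn : EConn ends ↑(Finset.univ : Finset E) := by
    intro m1 _ m2 _ x _ y _
    have h := hG x y
    rwa [show ((Finset.univ : Finset E) : Set E) = Set.univ from Finset.coe_univ]
  have heven' : Even (Finset.univ : Finset E).card := by rwa [Finset.card_univ]
  obtain ⟨P, h1, h2, h3⟩ :=
    main_lemma ends (Finset.univ : Finset E).card Finset.univ le_rfl hconn heven'
  exact ⟨P, fun p hp => (h1 p hp).2.2, h2, fun x => h3 x (Finset.mem_univ x)⟩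
end
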